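/- If a uniform algebra A on a compact Hausdorff space X is analytic (every element vanishing on a nonempty open set is identically zero) and X has no isolated points, then A is an integral domain. -/

import Mathlib

variable {X : Type} [TopologicalSpace X] [CompactSpace X] [T2Space X]

theorem stmt_1 (A : Subalgebra ℂ C(X, ℂ))
    (hanalytic : ∀ f ∈ A, ∀ U : Set X, IsOpen U → U.Nonempty →
      (∀ x ∈ U, f x = 0) → f = 0) :
    ∀ f g : C(X, ℂ), f ∈ A → g ∈ A → f * g = 0 → f = 0 ∨ g = 0 := by
  intro f g _ hg hfg
  refine or_iff_not_imp_left.2 fun hf => hanalytic g hg (Function.support f)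
    f.continuous.isOpen_support ?_ fun x hx => ?_
  · exact Function.support_nonempty_iff.2 (ContinuousMap.coe_injective.ne hf)
  · exact (mul_eq_zero.1 (ContinuousMap.congr_fun hfg x)).resolve_left hx
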